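/- Let A be a real symmetric positive definite 6×6 matrix with 3×3-block decomposition A = [[A_yy, A_yz],[A_zy, A_zz]], let J = diag(2^{−1/2}, 2^{−1/2}, 1), let B be the 6×3 matrix whose upper 3×3 block is O₃ and whose lower 3×3 block is J, let 𝒴(ζ) be the 6×6 matrix with block form [[I₃, −2^{1/2} ζ · I₃],[O₃, O₃]], and let 𝒳(ζ) = J⁻¹ A_zz⁻¹ A_zy · ( −ζ·I₃ | 2^{1/2}(ζ²/2 − 1/24)·I₃ ). Then the 6×6 matrix 𝒜 = ∫_{−1/2}^{1/2} 𝒴(ζ)ᵀ · A · (B · 𝒳′(ζ) + 𝒴(ζ)) dζ is block-diagonal: 𝒜 = [[A⁰, O₃],[O₃, (1/6)·A⁰]], where A⁰ = A_yy − A_yz · A_zz⁻¹ · A_zy is symmetric and positive definite. -/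

import Mathlib

/- STATEMENT 3: With A real symmetric positive definite 6×6, J = diag(2^{−1/2},2^{−1/2},1),
B = [[O₃],[J]], 𝒴(ζ) = [[I₃, −2^{1/2}ζI₃],[O₃,O₃]] and
𝒳(ζ) = J⁻¹ A_zz⁻¹ A_zy (−ζI₃ | 2^{1/2}(ζ²/2 − 1/24)I₃), the matrix
𝒜 = ∫_{−1/2}^{1/2} 𝒴(ζ)ᵀ A (B 𝒳′(ζ) + 𝒴(ζ)) dζ is block-diagonal:
𝒜 = [[A⁰, O₃],[O₃, (1/6)A⁰]], where A⁰ = A_yy − A_yz A_zz⁻¹ A_zy is symmetric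
positive definite. -/

open Matrix MeasureTheory

noncomputable section

def lo3 : Fin 3 → Fin 6 := fun i => ⟨i, by omega⟩
def hi3 : Fin 3 → Fin 6 := fun i => ⟨i + 3, by omega⟩

def Ayy (A : Matrix (Fin 6) (Fin 6) ℝ) : Matrix (Fin 3) (Fin 3) ℝ := A.submatrix lo3 lo3
def Ayz (A : Matrix (Fin 6) (Fin 6) ℝ) : Matrix (Fin 3) (Fin 3) ℝ := A.submatrix lo3 hi3
def Azy (A : Matrix (Fin 6) (Fin 6) ℝ) : Matrix (Fin 3) (Fin 3) ℝ := A.submatrix hi3 lo3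
def Azz (A : Matrix (Fin 6) (Fin 6) ℝ) : Matrix (Fin 3) (Fin 3) ℝ := A.submatrix hi3 hi3

/-- The Schur complement A⁰ = A_yy − A_yz · A_zz⁻¹ · A_zy. -/
def A0 (A : Matrix (Fin 6) (Fin 6) ℝ) : Matrix (Fin 3) (Fin 3) ℝ :=
  Ayy A - Ayz A * (Azz A)⁻¹ * Azy A

def Jmat : Matrix (Fin 3) (Fin 3) ℝ :=
  Matrix.diagonal ![(Real.sqrt 2)⁻¹, (Real.sqrt 2)⁻¹, 1]

/-- Horizontal concatenation ( M | N ) of two 3×3 blocks into a 3×6 matrix. -/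
def hcat (M N : Matrix (Fin 3) (Fin 3) ℝ) : Matrix (Fin 3) (Fin 6) ℝ :=
  Matrix.of fun i j =>
    if h : (j : ℕ) < 3 then M i ⟨j, h⟩ else N i ⟨(j : ℕ) - 3, by omega⟩

/-- Vertical concatenation of two 3×3 blocks into a 6×3 matrix. -/
def vcat (M N : Matrix (Fin 3) (Fin 3) ℝ) : Matrix (Fin 6) (Fin 3) ℝ :=
  Matrix.of fun i j =>
    if h : (i : ℕ) < 3 then M ⟨i, h⟩ j else N ⟨(i : ℕ) - 3, by omega⟩ j

/-- Vertical stacking of two 3×6 blocks into a 6×6 matrix. -/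
def vstack (M N : Matrix (Fin 3) (Fin 6) ℝ) : Matrix (Fin 6) (Fin 6) ℝ :=
  Matrix.of fun i j =>
    if h : (i : ℕ) < 3 then M ⟨i, h⟩ j else N ⟨(i : ℕ) - 3, by omega⟩ j

/-- 6×6 matrix from four 3×3 blocks [[P, Q],[R, S]]. -/
def blocks66 (P Q R S : Matrix (Fin 3) (Fin 3) ℝ) : Matrix (Fin 6) (Fin 6) ℝ :=
  vstack (hcat P Q) (hcat R S)

def Bmat : Matrix (Fin 6) (Fin 3) ℝ := vcat 0 Jmat

def Ymat (ζ : ℝ) : Matrix (Fin 6) (Fin 6) ℝ :=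
  blocks66 (1 : Matrix (Fin 3) (Fin 3) ℝ)
    ((-(Real.sqrt 2) * ζ) • (1 : Matrix (Fin 3) (Fin 3) ℝ)) 0 0

def Xmat (A : Matrix (Fin 6) (Fin 6) ℝ) (ζ : ℝ) : Matrix (Fin 3) (Fin 6) ℝ :=
  Jmat⁻¹ * (Azz A)⁻¹ * Azy A *
    hcat ((-ζ) • (1 : Matrix (Fin 3) (Fin 3) ℝ))
      ((Real.sqrt 2 * (ζ ^ 2 / 2 - 1 / 24)) • (1 : Matrix (Fin 3) (Fin 3) ℝ))

/-- Entrywise derivative 𝒳′(ζ). -/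
def Xd (A : Matrix (Fin 6) (Fin 6) ℝ) (ζ : ℝ) : Matrix (Fin 3) (Fin 6) ℝ :=
  Matrix.of fun i j => deriv (fun t => Xmat A t i j) ζ

/-- The entrywise integral 𝒜 = ∫_{−1/2}^{1/2} 𝒴(ζ)ᵀ A (B 𝒳′(ζ) + 𝒴(ζ)) dζ. -/
def calA (A : Matrix (Fin 6) (Fin 6) ℝ) : Matrix (Fin 6) (Fin 6) ℝ :=
  Matrix.of fun i j =>
    ∫ ζ in (-(1 : ℝ) / 2)..(1 / 2), ((Ymat ζ)ᵀ * A * (Bmat * Xd A ζ + Ymat ζ)) i j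

/-! In the block coordinates `Fin 6 ≃ Fin 3 ⊕ Fin 3`, write `u(ζ) = [I₃; -√2 ζ I₃]` and
`K = A_zz⁻¹ A_zy`. Since `J 𝒳′(ζ) = K (-I₃ | √2 ζ I₃)`, we have `𝒴(ζ)ᵀ = u(ζ) (I₃ | O₃)` and
`B 𝒳′(ζ) + 𝒴(ζ) = [I₃; -K] u(ζ)ᵀ`, while `(I₃ | O₃) A [I₃; -K] = A⁰`. So the integrand is
`u(ζ) A⁰ u(ζ)ᵀ`, with blocks `A⁰`, `-√2 ζ A⁰`, `-√2 ζ A⁰`, `2 ζ² A⁰`; over `[-1/2, 1/2]` the odd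
blocks integrate to zero and `∫ 2 ζ² = 1/6`. Positive definiteness of the Schur complement comes
from `A⁰ = Sᴴ A S` for the injective `S = [I₃; -K]`. -/

namespace Matrix

variable {m n : Type*} [Fintype m] [Fintype n] [DecidableEq m]

theorem PosDef.schur_complement₂₂ {𝕜 : Type*} [Field 𝕜] [PartialOrder 𝕜] [StarRing 𝕜]
    [DecidableEq n] {P : Matrix m m 𝕜} {Q : Matrix m n 𝕜} {C : Matrix n m 𝕜} {D : Matrix n n 𝕜}
    (h : (fromBlocks P Q C D).PosDef) : (P - Q * D⁻¹ * C).PosDef := by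
  have hD : D.PosDef := h.submatrix Sum.inr_injective
  set S : Matrix (m ⊕ n) m 𝕜 := fromRows 1 (-(D⁻¹ * C))
  have hS : Function.Injective S.mulVec := fun x y hxy => by
    simpa [S] using congrArg (· ∘ Sum.inl) hxy
  have hDK : D * (D⁻¹ * C) = C := by
    rw [← Matrix.mul_assoc, mul_nonsing_inv _ ((isUnit_iff_isUnit_det D).mp hD.isUnit),
      Matrix.one_mul]
  -- The second block row of `fromBlocks P Q C D * S` is `C - D D⁻¹ C = 0`.
  convert h.conjTranspose_mul_mul_same hS using 1
  simp [S, conjTranspose_fromRows_eq_fromCols_conjTranspose, fromBlocks_mul_fromRows,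
    fromCols_mul_fromRows, hDK, Matrix.mul_assoc, sub_eq_add_neg]

theorem fromBlocks_conj_eq_smul {α : Type*} [CommRing α] (c : α) (P : Matrix m m α)
    (Q : Matrix m n α) (R : Matrix n m α) (S : Matrix n n α) (K : Matrix n m α) :
    (fromBlocks 1 0 (c • 1) 0 : Matrix (m ⊕ m) (m ⊕ n) α) * fromBlocks P Q R S *
        (fromBlocks 1 (c • 1) (-K) (-(c • K)) : Matrix (m ⊕ n) (m ⊕ m) α) =
      fromBlocks (P - Q * K) (c • (P - Q * K)) (c • (P - Q * K)) ((c * c) • (P - Q * K)) := by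
  rw [Matrix.mul_assoc, fromBlocks_multiply, fromBlocks_multiply]
  simp only [Matrix.one_mul, Matrix.zero_mul, Matrix.mul_one, Matrix.smul_mul, Matrix.mul_smul,
    Matrix.mul_neg, add_zero]
  congr 1 <;> module

end Matrix

def yzEquiv : Fin 3 ⊕ Fin 3 ≃ Fin 6 := finSumFinEquiv

@[simp] lemma yzEquiv_inl (a : Fin 3) : yzEquiv (.inl a) = lo3 a := rfl

@[simp] lemma yzEquiv_inr (a : Fin 3) : yzEquiv (.inr a) = hi3 a :=
  Fin.ext (Nat.add_comm 3 a)

lemma hcat_submatrix_yzEquiv (M N : Matrix (Fin 3) (Fin 3) ℝ) :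
    (hcat M N).submatrix id yzEquiv = fromCols M N := by
  ext i (j | j) <;> simp [hcat, lo3, hi3]

lemma vcat_submatrix_yzEquiv (M N : Matrix (Fin 3) (Fin 3) ℝ) :
    (vcat M N).submatrix yzEquiv id = fromRows M N := by
  ext (i | i) j <;> simp [vcat, lo3, hi3]

lemma blocks66_submatrix_yzEquiv (P Q R S : Matrix (Fin 3) (Fin 3) ℝ) :
    (blocks66 P Q R S).submatrix yzEquiv yzEquiv = fromBlocks P Q R S := by
  ext (i | i) (j | j) <;> simp [blocks66, vstack, hcat, lo3, hi3]

lemma submatrix_yzEquiv (A : Matrix (Fin 6) (Fin 6) ℝ) :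
    A.submatrix yzEquiv yzEquiv = fromBlocks (Ayy A) (Ayz A) (Azy A) (Azz A) := by
  ext (i | i) (j | j) <;> simp [Ayy, Ayz, Azy, Azz]

lemma Jmat_mul_inv : Jmat * Jmat⁻¹ = 1 := by
  refine mul_nonsing_inv _ (isUnit_iff_ne_zero.mpr ?_)
  simp [Jmat, det_diagonal, Fin.prod_univ_three]

lemma mul_hcat (C M N : Matrix (Fin 3) (Fin 3) ℝ) : C * hcat M N = hcat (C * M) (C * N) := by
  ext i j
  by_cases h : (j : ℕ) < 3 <;> simp [hcat, mul_apply, h]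

lemma hasDerivAt_hcat_smul_apply {p q : ℝ → ℝ} {p' q' t : ℝ} (hp : HasDerivAt p p' t)
    (hq : HasDerivAt q q' t) (M N : Matrix (Fin 3) (Fin 3) ℝ) (i : Fin 3) (j : Fin 6) :
    HasDerivAt (fun s => hcat (p s • M) (q s • N) i j) (hcat (p' • M) (q' • N) i j) t := by
  by_cases h : (j : ℕ) < 3 <;> simp only [hcat, of_apply, h, dite_true, dite_false,
    Matrix.smul_apply, smul_eq_mul]
  exacts [hp.mul_const _, hq.mul_const _]

lemma Xd_eq (A : Matrix (Fin 6) (Fin 6) ℝ) (ζ : ℝ) :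
    Xd A ζ = hcat ((-1 : ℝ) • (Jmat⁻¹ * (Azz A)⁻¹ * Azy A))
      ((Real.sqrt 2 * ζ) • (Jmat⁻¹ * (Azz A)⁻¹ * Azy A)) := by
  have hp : HasDerivAt (fun t : ℝ => -t) (-1) ζ := hasDerivAt_neg ζ
  have hq : HasDerivAt (fun t : ℝ => Real.sqrt 2 * (t ^ 2 / 2 - 1 / 24)) (Real.sqrt 2 * ζ) ζ := by
    refine ((((hasDerivAt_pow 2 ζ).div_const 2).sub_const (1 / 24)).const_mul _).congr_deriv ?_
    norm_num
  ext i j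
  simp only [Xd, of_apply, Xmat, mul_hcat, Matrix.mul_smul, Matrix.mul_one]
  exact (hasDerivAt_hcat_smul_apply hp hq _ _ i j).deriv

lemma Bmat_mul_Xd_submatrix_yzEquiv (A : Matrix (Fin 6) (Fin 6) ℝ) (ζ : ℝ) :
    (Bmat * Xd A ζ).submatrix yzEquiv yzEquiv =
      fromBlocks 0 0 (-((Azz A)⁻¹ * Azy A)) (-((-(Real.sqrt 2) * ζ) • ((Azz A)⁻¹ * Azy A))) := by
  have hJ : Jmat * (Jmat⁻¹ * (Azz A)⁻¹ * Azy A) = (Azz A)⁻¹ * Azy A := by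
    rw [Matrix.mul_assoc Jmat⁻¹, ← Matrix.mul_assoc, Jmat_mul_inv, Matrix.one_mul]
  rw [← submatrix_mul_equiv _ _ _ (Equiv.refl _), Equiv.coe_refl, Bmat, vcat_submatrix_yzEquiv,
    Xd_eq, hcat_submatrix_yzEquiv, fromRows_mul_fromCols]
  simp only [Matrix.zero_mul, smul_zero, neg_zero, Matrix.mul_smul, Matrix.mul_neg, one_smul, hJ,
    neg_mul, neg_smul, neg_neg]

lemma Ymat_transpose_mul_mul (A : Matrix (Fin 6) (Fin 6) ℝ) (ζ : ℝ) :
    (Ymat ζ)ᵀ * A * (Bmat * Xd A ζ + Ymat ζ) =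
      blocks66 (A0 A) ((-(Real.sqrt 2) * ζ) • A0 A) ((-(Real.sqrt 2) * ζ) • A0 A)
        ((-(Real.sqrt 2) * ζ * (-(Real.sqrt 2) * ζ)) • A0 A) := by
  apply (reindex yzEquiv.symm yzEquiv.symm).injective
  simp only [reindex_apply, Equiv.symm_symm]
  rw [← submatrix_mul_equiv _ _ _ yzEquiv, ← submatrix_mul_equiv _ _ _ yzEquiv, submatrix_add,
    Pi.add_apply, Pi.add_apply, ← transpose_submatrix, Bmat_mul_Xd_submatrix_yzEquiv, Ymat,
    blocks66_submatrix_yzEquiv, submatrix_yzEquiv, blocks66_submatrix_yzEquiv,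
    fromBlocks_transpose, fromBlocks_add, A0, Matrix.mul_assoc (Ayz A)]
  simp only [transpose_one, transpose_smul, transpose_zero, zero_add, add_zero]
  exact fromBlocks_conj_eq_smul _ _ _ _ _ _

lemma intervalIntegral_blocks66_smul_apply (P Q R S : Matrix (Fin 3) (Fin 3) ℝ) (f g h : ℝ → ℝ)
    (a b : ℝ) (i j : Fin 6) :
    ∫ ζ in a..b, blocks66 P (f ζ • Q) (g ζ • R) (h ζ • S) i j =
      blocks66 ((b - a) • P) ((∫ ζ in a..b, f ζ) • Q) ((∫ ζ in a..b, g ζ) • R)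
        ((∫ ζ in a..b, h ζ) • S) i j := by
  by_cases hi : (i : ℕ) < 3 <;> by_cases hj : (j : ℕ) < 3 <;>
    simp [blocks66, vstack, hcat, hi, hj]

theorem calA_block_diagonal (A : Matrix (Fin 6) (Fin 6) ℝ) (hA : A.PosDef) :
    calA A = blocks66 (A0 A) 0 0 ((1 / 6 : ℝ) • A0 A) ∧ (A0 A).PosDef := by
  have hlin : ∫ ζ in (-(1 : ℝ) / 2)..(1 / 2), -(Real.sqrt 2) * ζ = 0 := by
    rw [intervalIntegral.integral_const_mul, integral_id]
    norm_num
  have hquad :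
      ∫ ζ in (-(1 : ℝ) / 2)..(1 / 2), -(Real.sqrt 2) * ζ * (-(Real.sqrt 2) * ζ) = 1 / 6 := by
    have hsq (ζ : ℝ) : -(Real.sqrt 2) * ζ * (-(Real.sqrt 2) * ζ) = 2 * ζ ^ 2 := by
      rw [show -(Real.sqrt 2) * ζ * (-(Real.sqrt 2) * ζ) = Real.sqrt 2 ^ 2 * ζ ^ 2 by ring,
        Real.sq_sqrt zero_le_two]
    simp_rw [hsq, intervalIntegral.integral_const_mul, integral_pow]
    norm_num
  refine ⟨?_, ?_⟩
  · ext i j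
    simp only [calA, of_apply, Ymat_transpose_mul_mul, intervalIntegral_blocks66_smul_apply, hlin,
      hquad, zero_smul]
    norm_num
  · have hblocks := hA.submatrix yzEquiv.injective
    rw [submatrix_yzEquiv] at hblocks
    exact hblocks.schur_complement₂₂
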